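/- Assume k ∈ (0,1), δ, α > 0, u_H > u_L ≥ 0, (u_H+u_L)/2 > p ≥ 0, and k ≤ k̲ := (1 + √(1 − (u_H−u_L)/(2(u_H−p))))/2. Then u_G(λ) = λ^{k−1}·((u_H−p) − (u_H−u_L)δ/(2δ+λ^k α)) is monotone non-increasing on (0,∞). -/

import Mathlib

/-!
With `ψ = λ^k α`, `A = u_H - p` and `B = u_H - u_L`, the derivative of `u_G` is `λ^(k-2) / (2δ + ψ)²`
times `-h(ψ)`, where `h(ψ) = (1-k) A (2δ+ψ)² - B δ (2δ(1-k) + ψ)` is a quadratic in `ψ` with positive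
leading and constant coefficients (as `B < 2A`). So `h ≥ 0` on `ψ ≥ 0` as soon as its linear
coefficient `δ (4(1-k)A - B)` is nonnegative, which covers `k ≤ 1/2`, or its discriminant is
nonpositive, which reads `B ≤ 8 A k (1-k)`, i.e. `(2k-1)² ≤ 1 - B/(2A)`, i.e. `k ≤ k̲` for `k > 1/2`.
-/

open Real Set

/-- In the theorem `A = u_H - p` and `C = (u_H - u_L) δ`. -/
noncomputable def uG (k δ α A C lam : ℝ) : ℝ := lam ^ (k - 1) * (A - C / (2 * δ + lam ^ k * α))

def DiscCondition (k A B : ℝ) : Prop := B ≤ 4 * (1 - k) * A ∨ B ≤ 8 * A * k * (1 - k)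

theorem hasDerivAt_uG {k δ α A C x : ℝ} (hx : 0 < x) (hδ : 0 < δ) (hα : 0 < α) :
    HasDerivAt (uG k δ α A C)
      (x ^ (k - 2) * (C * (2 * δ * (1 - k) + x ^ k * α) - (1 - k) * A * (2 * δ + x ^ k * α) ^ 2)
        / (2 * δ + x ^ k * α) ^ 2) x := by
  have hD : 0 < 2 * δ + x ^ k * α := by positivity
  have hpow : x ^ (k - 1) * x ^ (k - 1) = x ^ (k - 2) * x ^ k := by
    rw [← rpow_add hx, ← rpow_add hx]; ring_nf
  have hpred : x ^ (k - 1 - 1) = x ^ (k - 2) := by ring_nf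
  have hden : HasDerivAt (fun y => 2 * δ + y ^ k * α) (k * x ^ (k - 1) * α) x := by
    simpa using ((hasDerivAt_rpow_const (p := k) (Or.inl hx.ne')).mul_const α).const_add (2 * δ)
  refine ((hasDerivAt_rpow_const (p := k - 1) (Or.inl hx.ne')).mul
    ((hasDerivAt_const x A).sub ((hasDerivAt_const x C).div hden hD.ne'))).congr_deriv ?_
  simp only [Pi.sub_apply, Pi.div_apply, hpred]
  field_simp
  linear_combination (C * k * α) * hpow

theorem quadratic_nonneg_of_nonneg_or_discrim_le {a b c ψ : ℝ} (ha : 0 < a) (hc : 0 ≤ c)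
    (hψ : 0 ≤ ψ) (h : 0 ≤ b ∨ b ^ 2 ≤ 4 * a * c) : 0 ≤ a * ψ ^ 2 + b * ψ + c := by
  rcases h with hb | hdisc
  · positivity
  · nlinarith [sq_nonneg (2 * a * ψ + b)]

theorem discCondition_of_le_threshold {k A B : ℝ} (hA : 0 < A) (hBA : B ≤ 2 * A)
    (hk : k ≤ (1 + √(1 - B / (2 * A))) / 2) : DiscCondition k A B := by
  rcases le_or_gt k (1 / 2) with hk_half | hk_half
  · left; nlinarith
  · right
    have hsq : (2 * k - 1) ^ 2 ≤ 1 - B / (2 * A) := (le_sqrt' (by linarith)).1 (by linarith)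
    have : B / (2 * A) ≤ 4 * k * (1 - k) := by linarith
    rw [div_le_iff₀ (by positivity)] at this
    linarith

theorem mul_le_mul_sq_of_discCondition {k A B δ ψ : ℝ} (hk : k < 1) (hA : 0 < A) (hB : 0 ≤ B)
    (hBA : B ≤ 2 * A) (hδ : 0 ≤ δ) (hψ : 0 ≤ ψ) (hcond : DiscCondition k A B) :
    B * δ * (2 * δ * (1 - k) + ψ) ≤ (1 - k) * A * (2 * δ + ψ) ^ 2 := by
  have hquad := quadratic_nonneg_of_nonneg_or_discrim_le (a := (1 - k) * A)
    (b := δ * (4 * (1 - k) * A - B)) (c := 2 * δ ^ 2 * (1 - k) * (2 * A - B))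
    (mul_pos (sub_pos.2 hk) hA)
    (mul_nonneg (mul_nonneg (by positivity) (sub_nonneg.2 hk.le)) (sub_nonneg.2 hBA)) hψ ?_
  · linear_combination hquad
  rcases hcond with h | h
  · exact .inl (mul_nonneg hδ (by linarith))
  · exact .inr (by linear_combination mul_nonneg (sq_nonneg δ) (mul_nonneg hB (sub_nonneg.2 h)))

theorem antitoneOn_uG {k δ α A B : ℝ} (hk : k < 1) (hδ : 0 < δ) (hα : 0 < α) (hA : 0 < A)
    (hB : 0 ≤ B) (hBA : B ≤ 2 * A) (hcond : DiscCondition k A B) :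
    AntitoneOn (uG k δ α A (B * δ)) (Ioi 0) := by
  refine antitoneOn_of_deriv_nonpos (convex_Ioi 0)
    (fun x hx => (hasDerivAt_uG hx hδ hα).continuousAt.continuousWithinAt) ?_ ?_ <;>
    rw [interior_Ioi]
  · exact fun x hx => (hasDerivAt_uG hx hδ hα).differentiableAt.differentiableWithinAt
  · intro x (hx : 0 < x)
    rw [(hasDerivAt_uG hx hδ hα).deriv]
    have hh := mul_le_mul_sq_of_discCondition hk hA hB hBA hδ.le
      (by positivity : 0 ≤ x ^ k * α) hcond
    exact div_nonpos_of_nonpos_of_nonneg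
      (mul_nonpos_of_nonneg_of_nonpos (by positivity) (by linarith)) (sq_nonneg _)

theorem uG_monotone_general (k δ α uH uL p : ℝ)
    (hk : k ∈ Set.Ioo (0:ℝ) 1) (hδ : 0 < δ) (hα : 0 < α)
    (hu : uH > uL) (hgain : (uH + uL) / 2 > p)
    (hksmall : k ≤ (1 + Real.sqrt (1 - (uH - uL) / (2 * (uH - p)))) / 2) :
    AntitoneOn (fun lam : ℝ => lam ^ (k - 1) * (uH - p - (uH - uL) * δ / (2 * δ + lam ^ k * α)))
      (Set.Ioi 0) := by
  have hA : 0 < uH - p := by linarith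
  have hBA : uH - uL ≤ 2 * (uH - p) := by linarith
  exact antitoneOn_uG hk.2 hδ hα hA (by linarith) hBA
    (discCondition_of_le_threshold hA hBA hksmall)

theorem uG_monotone (k δ α uH uL p : ℝ)
    (hk : k ∈ Set.Ioo (0:ℝ) 1) (hδ : 0 < δ) (hα : 0 < α)
    (hu : uH > uL) (huL : uL ≥ 0) (hp : p ≥ 0) (hgain : (uH + uL) / 2 > p)
    (hksmall : k ≤ (1 + Real.sqrt (1 - (uH - uL) / (2 * (uH - p)))) / 2) :
    AntitoneOn (fun lam : ℝ => lam ^ (k - 1) * (uH - p - (uH - uL) * δ / (2 * δ + lam ^ k * α)))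
      (Set.Ioi 0) :=
  uG_monotone_general k δ α uH uL p hk hδ hα hu hgain hksmall
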